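/- For any closed set C ⊂ (0,1) of Lebesgue measure zero, and any ε > 0, there exists a finite subset C_ε ⊂ C such that ‖∇(μ_C − μ_{C_ε})‖₂² < ε. Consequently there is a sequence of finite sets Cⱼ ⊂ C with μ_{Cⱼ} → μ_C in H¹₀(B). -/

import Mathlib

open Real MeasureTheory Set Filter Topology

/-! In the variable `t = log r⁻¹` a tower is the affine interpolation of `t ↦ √(t / 2π)` on
each gap of its support, so two towers taking the same values at the endpoints of a gap agree on
it, and every tower is constant below `inf C` (a nonzero slope would make `|w'|² r ∼ 1/r`
non-integrable at `0`). For a finite set `F` the tower is built explicitly; the squared slope of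
a chord of `√(t / 2π)` with right end `t` is at most `1 / (2π t)`, and `t ≥ log (sup F)⁻¹` on
every gap, which bounds `|u'|² r` by a constant `M` depending only on `inf F` and `sup F`.

Given `C`, take a compact `K ⊆ U = (inf C, sup C) \ C` such that `2|w'|² r + 2M` has small
integral over `U \ K`, cover `K` by finitely many gaps of `C` and let `F` consist of their
endpoints together with `inf C` and `sup C`. Then `w' = u'` outside `C ∪ (U \ K)`, the set `C`
is null, and on `U \ K` the integrand `(w' - u')² r` is at most `2|w'|² r + 2M`. -/

/-- `w` is the Moser-Carleson-Chang tower `μ_C` on the closed set `C ⊆ (0,1)`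
(with `C₋ = ∅`): a continuous radial `H¹₀`-function on the unit disk equal to
`√(log(1/r)/(2π))` on `C` and radially harmonic on the complementary intervals. -/
def IsTower (C : Set ℝ) (w : ℝ → ℝ) : Prop :=
  IsClosed C ∧ C.Nonempty ∧ C ⊆ Set.Ioo 0 1 ∧
  ContinuousOn w (Set.Ioc 0 1) ∧ w 1 = 0 ∧
  (∀ r ∈ C, w r = Real.sqrt (Real.log r⁻¹ / (2 * π))) ∧
  (∀ a b : ℝ, a < b → Set.Ioo a b ⊆ Set.Ioo 0 1 \ C →
    ∃ A B : ℝ, ∀ r ∈ Set.Ioo a b, w r = A + B * Real.log r⁻¹) ∧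
  MeasureTheory.IntegrableOn (fun r => (deriv w r) ^ 2 * r) (Set.Ioo 0 1) volume

theorem exists_gap {S : Set ℝ} {x a b : ℝ} (hlt : IsClosed (S ∩ Iio x))
    (hge : IsClosed (S ∩ Ici x)) (ha : a ∈ S) (hax : a < x) (hb : b ∈ S) (hxb : x ≤ b) :
    ∃ α ∈ S, ∃ β ∈ S, α < x ∧ x ≤ β ∧ Disjoint (Ioo α β) S := by
  have hbdd : BddAbove (S ∩ Iio x) := ⟨x, fun _ h => h.2.le⟩
  have hbdd' : BddBelow (S ∩ Ici x) := ⟨x, fun _ h => h.2⟩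
  have hα := hlt.csSup_mem ⟨a, ha, hax⟩ hbdd
  have hβ := hge.csInf_mem ⟨b, hb, hxb⟩ hbdd'
  refine ⟨_, hα.1, _, hβ.1, hα.2, hβ.2, disjoint_left.2 fun τ hτ hτS => ?_⟩
  rcases lt_or_ge τ x with h | h
  · exact (le_csSup hbdd ⟨hτS, h⟩).not_gt hτ.1
  · exact (csInf_le hbdd' ⟨hτS, h⟩).not_gt hτ.2

theorem IsClosed.exists_gap_of_notMem {S : Set ℝ} (hS : IsClosed S) {x a b : ℝ} (hx : x ∉ S)
    (ha : a ∈ S) (hax : a ≤ x) (hb : b ∈ S) (hxb : x ≤ b) :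
    ∃ α ∈ S, ∃ β ∈ S, x ∈ Ioo α β ∧ Disjoint (Ioo α β) S := by
  have hIio : S ∩ Iio x = S ∩ Iic x := Set.ext fun y => and_congr_right fun hy =>
    lt_iff_le_and_ne.trans (and_iff_left (ne_of_mem_of_not_mem hy hx))
  obtain ⟨α, hα, β, hβ, hαx, hxβ, hdisj⟩ :=
    exists_gap (hIio ▸ hS.inter isClosed_Iic) (hS.inter isClosed_Ici) ha
      (hax.lt_of_ne (ne_of_mem_of_not_mem ha hx)) hb hxb
  exact ⟨α, hα, β, hβ, ⟨hαx, hxβ.lt_of_ne (ne_of_mem_of_not_mem hβ hx).symm⟩, hdisj⟩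

theorem Set.Finite.exists_gap {S : Set ℝ} (hS : S.Finite) {x a b : ℝ}
    (ha : a ∈ S) (hax : a < x) (hb : b ∈ S) (hxb : x ≤ b) :
    ∃ α ∈ S, ∃ β ∈ S, α < x ∧ x ≤ β ∧ Disjoint (Ioo α β) S :=
  _root_.exists_gap (hS.subset inter_subset_left).isClosed
    (hS.subset inter_subset_left).isClosed ha hax hb hxb

theorem IsCompact.exists_finite_gap_cover {C K : Set ℝ} (hK : IsCompact K)
    (hKC : ∀ x ∈ K, ∃ α ∈ C, ∃ β ∈ C, x ∈ Ioo α β ∧ Disjoint (Ioo α β) C) :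
    ∃ F ⊆ C, F.Finite ∧
      ∀ x ∈ K, ∃ α ∈ F, ∃ β ∈ F, x ∈ Ioo α β ∧ Disjoint (Ioo α β) C := by
  choose! α hα β hβ hmem hdisj using hKC
  obtain ⟨t, htK, ht, hcover⟩ := hK.elim_finite_subcover_image
    (c := fun x => Ioo (α x) (β x)) (fun _ _ => isOpen_Ioo) fun x hx =>
      mem_biUnion hx (hmem x hx)
  refine ⟨α '' t ∪ β '' t, union_subset ?_ ?_, (ht.image α).union (ht.image β), fun x hx => ?_⟩
  · exact image_subset_iff.2 fun y hy => hα y (htK hy)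
  · exact image_subset_iff.2 fun y hy => hβ y (htK hy)
  · obtain ⟨y, hy, hxy⟩ := mem_iUnion₂.1 (hcover hx)
    exact ⟨α y, .inl ⟨y, hy, rfl⟩, β y, .inr ⟨y, hy, rfl⟩, hxy, hdisj y (htK hy)⟩

theorem exists_isCompact_setIntegral_sdiff_lt {X : Type*} [TopologicalSpace X]
    [MeasurableSpace X] [OpensMeasurableSpace X] [T2Space X] {μ : Measure X}
    [μ.InnerRegularCompactLTTop] {U : Set X} (hU : MeasurableSet U) (hμU : μ U ≠ ⊤)
    {f : X → ℝ} (hf : IntegrableOn f U μ) {δ : ℝ} (hδ : 0 < δ) :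
    ∃ K ⊆ U, IsCompact K ∧ ∫ x in U \ K, f x ∂μ < δ := by
  choose K hKU hK hμK using fun n : ℕ =>
    hU.exists_isCompact_sdiff_lt hμU (ε := (n : ENNReal)⁻¹) (by simp)
  have hμ : Tendsto (μ.restrict U ∘ fun n => U \ K n) atTop (𝓝 0) :=
    tendsto_of_tendsto_of_tendsto_of_le_of_le tendsto_const_nhds
      ENNReal.tendsto_inv_nat_nhds_zero (fun _ => zero_le)
      fun n => (Measure.restrict_apply_le _ _).trans (hμK n).le
  obtain ⟨n, hn⟩ := ((hf.tendsto_setIntegral_nhds_zero hμ).eventually (gt_mem_nhds hδ)).exists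
  refine ⟨K n, hKU n, hK n, ?_⟩
  rwa [Measure.restrict_restrict_of_subset sdiff_subset] at hn

theorem setIntegral_Ioo_sq_sub_mul_le {C E : Set ℝ} {φ ψ : ℝ → ℝ} {M : ℝ}
    (hφ : Measurable φ) (hψ : Measurable ψ) (hC : volume C = 0) (hE : MeasurableSet E)
    (hE01 : E ⊆ Ioo 0 1) (hφE : IntegrableOn (fun r => φ r ^ 2 * r) E)
    (hψE : ∀ r ∈ E, ψ r ^ 2 * r ≤ M) (heq : ∀ r ∈ Ioo 0 1, r ∉ C → r ∉ E → φ r = ψ r) :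
    ∫ r in Ioo 0 1, (φ r - ψ r) ^ 2 * r ≤ ∫ r in E, (2 * (φ r ^ 2 * r) + 2 * M) := by
  have hbound : ∀ r ∈ E, (φ r - ψ r) ^ 2 * r ≤ 2 * (φ r ^ 2 * r) + 2 * M := fun r hr => by
    nlinarith [sq_nonneg (φ r + ψ r), (hE01 hr).1, hψE r hr]
  have hg : IntegrableOn (fun r => 2 * (φ r ^ 2 * r) + 2 * M) E :=
    (hφE.const_mul 2).add (integrableOn_const (measure_mono hE01 |>.trans_lt measure_Ioo_lt_top).ne)
  have hf : IntegrableOn (fun r => (φ r - ψ r) ^ 2 * r) E :=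
    hg.mono' (((hφ.sub hψ).pow_const 2).mul measurable_id).aestronglyMeasurable <|
      (ae_restrict_iff' hE).2 <| Eventually.of_forall fun r hr => by
        rw [norm_of_nonneg (mul_nonneg (sq_nonneg _) (hE01 hr).1.le)]
        exact hbound r hr
  rw [setIntegral_eq_of_subset_of_ae_sdiff_eq_zero measurableSet_Ioo.nullMeasurableSet hE01]
  · exact setIntegral_mono_on hf hg hE hbound
  · filter_upwards [measure_eq_zero_iff_ae_notMem.1 hC] with r hrC hr
    rw [heq r hr.1 hrC hr.2, sub_self, sq, zero_mul, zero_mul]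

theorem log_inv_pos_of_mem_Ioo {x : ℝ} (hx : x ∈ Ioo (0 : ℝ) 1) : 0 < log x⁻¹ := by
  rw [log_inv, neg_pos]
  exact log_neg hx.1 hx.2

theorem log_inv_lt_log_inv {α β : ℝ} (hα : 0 < α) (hαβ : α < β) : log β⁻¹ < log α⁻¹ :=
  log_lt_log (inv_pos.2 (hα.trans hαβ)) (inv_strictAnti₀ hα hαβ)

theorem hasDerivAt_affine_log (A B : ℝ) {x : ℝ} (hx : x ≠ 0) :
    HasDerivAt (fun r => A + B * log r⁻¹) (-B / x) x := by
  have := ((hasDerivAt_log hx).const_mul B).const_sub A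
  simp only [log_inv, mul_neg, ← sub_eq_add_neg]
  exact this.congr_deriv (by ring)

theorem deriv_eq_of_eqOn_affine_log {f : ℝ → ℝ} {s : Set ℝ} {A B x : ℝ} (hs : s ∈ 𝓝 x)
    (hf : ∀ r ∈ s, f r = A + B * log r⁻¹) (hx : x ≠ 0) : deriv f x = -B / x :=
  ((hasDerivAt_affine_log A B hx).congr_of_eventuallyEq (eventuallyEq_of_mem hs hf)).deriv

theorem continuousOn_affine_log (A B : ℝ) {s : Set ℝ} (hs : (0 : ℝ) ∉ s) :
    ContinuousOn (fun r => A + B * log r⁻¹) s :=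
  continuousOn_const.add <| continuousOn_const.mul <|
    (continuousOn_inv₀.mono fun _ hr h => hs (h ▸ hr)).log fun _ hr =>
      inv_ne_zero (ne_of_mem_of_not_mem hr hs)

theorem ContinuousOn.eqOn_affine_log_Icc {f : ℝ → ℝ} {A B α β : ℝ}
    (hf : ContinuousOn f (Icc α β)) (hα : 0 < α) (hαβ : α < β)
    (h : ∀ r ∈ Ioo α β, f r = A + B * Real.log r⁻¹) :
    EqOn f (fun r => A + B * Real.log r⁻¹) (Icc α β) :=
  EqOn.of_subset_closure h hf (continuousOn_affine_log A B fun h0 => hα.not_ge h0.1)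
    Ioo_subset_Icc_self (closure_Ioo hαβ.ne).ge

theorem eqOn_Icc_of_affine_log {f g : ℝ → ℝ} {α β : ℝ} (hα : 0 < α) (hαβ : α < β)
    (hf : ContinuousOn f (Icc α β)) (hg : ContinuousOn g (Icc α β))
    (hfa : ∃ A B : ℝ, ∀ r ∈ Ioo α β, f r = A + B * log r⁻¹)
    (hga : ∃ A B : ℝ, ∀ r ∈ Ioo α β, g r = A + B * log r⁻¹)
    (hfgα : f α = g α) (hfgβ : f β = g β) : EqOn f g (Icc α β) := by
  obtain ⟨A, B, hf'⟩ := hfa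
  obtain ⟨A', B', hg'⟩ := hga
  replace hf' := hf.eqOn_affine_log_Icc hα hαβ hf'
  replace hg' := hg.eqOn_affine_log_Icc hα hαβ hg'
  have hα' := left_mem_Icc.2 hαβ.le
  have hβ' := right_mem_Icc.2 hαβ.le
  have h₁ : A + B * log α⁻¹ = A' + B' * log α⁻¹ := (hf' hα').symm.trans (hfgα.trans (hg' hα'))
  have h₂ : A + B * log β⁻¹ = A' + B' * log β⁻¹ := (hf' hβ').symm.trans (hfgβ.trans (hg' hβ'))
  have hB : B = B' := mul_right_cancel₀ (sub_ne_zero.2 (log_inv_lt_log_inv hα hαβ).ne) <| by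
    linear_combination h₂ - h₁
  have hA : A = A' := by subst hB; linarith
  intro r hr
  rw [hf' hr, hg' hr, hA, hB]

theorem eq_zero_of_integrableOn_deriv_sq_mul {f : ℝ → ℝ} {A B c : ℝ} (hc : 0 < c)
    (hf : ∀ r ∈ Ioo 0 c, f r = A + B * log r⁻¹)
    (hint : IntegrableOn (fun r => deriv f r ^ 2 * r) (Ioo 0 c)) : B = 0 := by
  by_contra hB
  have heq : EqOn (fun r => deriv f r ^ 2 * r) (fun r => B ^ 2 * r⁻¹) (Ioo 0 c) :=
    fun r hr => by
      simp only [deriv_eq_of_eqOn_affine_log (Ioo_mem_nhds hr.1 hr.2) hf hr.1.ne']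
      field_simp
  have hinv : IntegrableOn (fun r : ℝ => r⁻¹) (Ioo 0 c) :=
    IntegrableOn.congr_fun ((hint.congr_fun heq measurableSet_Ioo).const_mul (B ^ 2)⁻¹)
      (fun r _ => by field_simp) measurableSet_Ioo
  rcases intervalIntegrable_inv_iff.1
    ((intervalIntegrable_iff_integrableOn_Ioo_of_le hc.le).2 hinv) with h | h
  · exact hc.ne h
  · exact h left_mem_uIcc

theorem sq_sqrt_div_slope_le {c s t : ℝ} (hc : 0 < c) (hs : 0 ≤ s) (hst : s < t) :
    ((√(s / c) - √(t / c)) / (s - t)) ^ 2 ≤ 1 / (c * t) := by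
  have ht : 0 < t := hs.trans_lt hst
  set p := √(s / c)
  set q := √(t / c)
  have hp : p ^ 2 = s / c := sq_sqrt (by positivity)
  have hq : q ^ 2 = t / c := sq_sqrt (by positivity)
  have hq0 : 0 < q := sqrt_pos.2 (by positivity)
  have hpq : p - q ≠ 0 := sub_ne_zero.2 fun h => by
    rw [h, hq, div_left_inj' hc.ne'] at hp; exact hst.ne' hp
  have hslope : (p - q) / (s - t) = 1 / (c * (p + q)) := by
    have hs' : c * p ^ 2 = s := by rw [hp]; field_simp
    have ht' : c * q ^ 2 = t := by rw [hq]; field_simp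
    rw [show s - t = c * (p - q) * (p + q) by linear_combination ht' - hs']
    field_simp
  rw [hslope, div_pow, one_pow, show c * t = (c * q) ^ 2 by rw [mul_pow, hq]; field_simp]
  gcongr
  linarith [sqrt_nonneg (s / c)]

noncomputable def towerHeight (r : ℝ) : ℝ := √(log r⁻¹ / (2 * π))

noncomputable def logSlope (α β : ℝ) : ℝ :=
  (towerHeight β - towerHeight α) / (log β⁻¹ - log α⁻¹)

noncomputable def logChord (α β r : ℝ) : ℝ :=
  towerHeight α + logSlope α β * (log r⁻¹ - log α⁻¹)

theorem towerHeight_one : towerHeight 1 = 0 := by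
  simp [towerHeight]

theorem logSlope_sq_le {α β : ℝ} (hα : 0 < α) (hαβ : α < β) (hβ : β ≤ 1) :
    logSlope α β ^ 2 ≤ 1 / (2 * π * log α⁻¹) :=
  sq_sqrt_div_slope_le (by positivity) (log_nonneg (one_le_inv_iff₀.2 ⟨hα.trans hαβ, hβ⟩))
    (log_inv_lt_log_inv hα hαβ)

theorem logChord_eq (α β r : ℝ) :
    logChord α β r = (towerHeight α - logSlope α β * log α⁻¹) + logSlope α β * log r⁻¹ := by
  rw [logChord]; ring

theorem logChord_left (α β : ℝ) : logChord α β α = towerHeight α := by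
  simp [logChord]

theorem logChord_right {α β : ℝ} (hα : 0 < α) (hαβ : α < β) :
    logChord α β β = towerHeight β := by
  rw [logChord, logSlope,
    div_mul_cancel₀ _ (sub_ne_zero.2 (log_inv_lt_log_inv hα hαβ).ne)]
  ring

theorem logChord_self (α r : ℝ) : logChord α α r = towerHeight α := by
  simp [logChord, logSlope]

/-- Below `inf F` the value at `inf F` is continued constantly; above it, `r` is placed
between its neighbours in `F ∪ {1}`. At a point of `F ∪ {1}` both neighbours are the point
itself and `logChord r r = towerHeight r`, the slope being `0 / 0 = 0`. -/
noncomputable def finiteTower (F : Set ℝ) (r : ℝ) : ℝ :=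
  logChord (sSup (insert 1 F ∩ Iic (max r (sInf F))))
    (sInf (insert 1 F ∩ Ici (max r (sInf F)))) (max r (sInf F))

section finiteTower

variable {F : Set ℝ}

theorem finiteTower_of_mem {r : ℝ} (hr : r ∈ insert 1 F) (hFr : sInf F ≤ r) :
    finiteTower F r = towerHeight r := by
  have hsup : sSup (insert 1 F ∩ Iic r) = r :=
    IsGreatest.csSup_eq ⟨⟨hr, mem_Iic.2 le_rfl⟩, fun _ h => h.2⟩
  have hinf : sInf (insert 1 F ∩ Ici r) = r :=
    IsLeast.csInf_eq ⟨⟨hr, mem_Ici.2 le_rfl⟩, fun _ h => h.2⟩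
  rw [finiteTower, max_eq_left hFr, hsup, hinf, logChord_self]

theorem finiteTower_of_le_sInf (F : Set ℝ) {r : ℝ} (hr : r ≤ sInf F) :
    finiteTower F r = finiteTower F (sInf F) := by
  rw [finiteTower, finiteTower, max_eq_right hr, max_self]

theorem finiteTower_eqOn_Icc {α β : ℝ} (hFα : sInf F ≤ α) (hα : α ∈ F) (hα0 : 0 < α)
    (hβ : β ∈ insert 1 F) (hαβ : α < β) (hgap : Disjoint (Ioo α β) (insert 1 F)) :
    EqOn (finiteTower F) (logChord α β) (Icc α β) := by
  rintro r ⟨hαr, hrβ⟩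
  rcases hαr.eq_or_lt with rfl | hαr
  · rw [finiteTower_of_mem (mem_insert_of_mem _ hα) hFα, logChord_left]
  rcases hrβ.eq_or_lt with rfl | hrβ
  · rw [finiteTower_of_mem hβ (hFα.trans hαβ.le), logChord_right hα0 hαβ]
  have hnot : ∀ τ ∈ insert 1 F, τ ∉ Ioo α β := fun τ hτ hτ' => disjoint_left.1 hgap hτ' hτ
  have hsup : sSup (insert 1 F ∩ Iic r) = α := IsGreatest.csSup_eq
    ⟨⟨mem_insert_of_mem _ hα, hαr.le⟩, fun τ hτ =>
      not_lt.1 fun h => hnot τ hτ.1 ⟨h, hτ.2.trans_lt hrβ⟩⟩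
  have hinf : sInf (insert 1 F ∩ Ici r) = β := IsLeast.csInf_eq
    ⟨⟨hβ, hrβ.le⟩, fun τ hτ => not_lt.1 fun h => hnot τ hτ.1 ⟨hαr.trans_le hτ.2, h⟩⟩
  rw [finiteTower, max_eq_left (hFα.trans hαr.le), hsup, hinf]

theorem exists_finiteTower_gap (hF : F.Finite) (hne : F.Nonempty) {x : ℝ} (hx : sInf F < x)
    (hx1 : x ≤ 1) :
    ∃ α ∈ F, ∃ β ∈ insert 1 F, α < x ∧ x ≤ β ∧ Disjoint (Ioo α β) (insert 1 F) := by
  obtain ⟨α, hα, β, hβ, hαx, hxβ, hgap⟩ := (hF.insert 1).exists_gap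
    (mem_insert_of_mem _ (hne.csInf_mem hF)) hx (mem_insert 1 F) hx1
  exact ⟨α, hα.resolve_left (hαx.trans_le hx1).ne, β, hβ, hαx, hxβ, hgap⟩

theorem continuousOn_finiteTower (hF : F.Finite) (hne : F.Nonempty) (hF01 : F ⊆ Ioo 0 1) :
    ContinuousOn (finiteTower F) (Ioc 0 1) := by
  set P := {p : ℝ × ℝ | p.1 ∈ F ∧ p.2 ∈ insert 1 F ∧ p.1 < p.2 ∧
    Disjoint (Ioo p.1 p.2) (insert 1 F)}
  have : Finite P := ((hF.prod (hF.insert 1)).subset fun p hp => ⟨hp.1, hp.2.1⟩).to_subtype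
  have hcover : Ioc 0 1 ⊆ Iic (sInf F) ∪ ⋃ p : P, Icc p.1.1 p.1.2 := fun x hx =>
    (le_or_gt x (sInf F)).imp id fun h => by
      obtain ⟨α, hα, β, hβ, hαx, hxβ, hgap⟩ := exists_finiteTower_gap hF hne h hx.2
      exact mem_iUnion.2 ⟨⟨(α, β), hα, hβ, hαx.trans_le hxβ, hgap⟩, hαx.le, hxβ⟩
  refine ContinuousOn.mono ?_ hcover
  refine ContinuousOn.union_of_isClosed ?_ ?_ isClosed_Iic
    (isClosed_iUnion_of_finite fun _ => isClosed_Icc)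
  · exact continuousOn_const.congr fun r hr => finiteTower_of_le_sInf F hr
  refine (locallyFinite_of_finite _).continuousOn_iUnion (fun _ => isClosed_Icc)
    fun ⟨p, hα, hβ, hαβ, hgap⟩ => ?_
  have hα0 := (hF01 hα).1
  exact ((continuousOn_affine_log _ _ fun h => hα0.not_ge h.1).congr fun r _ =>
    logChord_eq _ _ r).congr (finiteTower_eqOn_Icc (csInf_le hF.bddBelow hα) hα hα0 hβ hαβ hgap)

theorem finiteTower_eq_affine_log_of_gap (hF : F.Finite) (hne : F.Nonempty)
    (hF01 : F ⊆ Ioo 0 1) {a b : ℝ} (hab : a < b) (hsub : Ioo a b ⊆ Ioo 0 1 \ F) :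
    ∃ A B : ℝ, ∀ r ∈ Ioo a b, finiteTower F r = A + B * log r⁻¹ := by
  rcases le_or_gt b (sInf F) with hb | hb
  · exact ⟨finiteTower F (sInf F), 0, fun _ hr => by
      rw [finiteTower_of_le_sInf F (hr.2.le.trans hb), zero_mul, add_zero]⟩
  have hS : Disjoint (Ioo a b) (insert 1 F) := disjoint_left.2 fun r hr h =>
    h.elim (hsub hr).1.2.ne (hsub hr).2
  have ha : sInf F ≤ a := not_lt.1 fun h =>
    disjoint_left.1 hS ⟨h, hb⟩ (mem_insert_of_mem _ (hne.csInf_mem hF))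
  have hx : (a + b) / 2 ∈ Ioo a b := ⟨by linarith, by linarith⟩
  obtain ⟨α, hα, β, hβ, hαx, hxβ, hgap⟩ :=
    exists_finiteTower_gap hF hne (ha.trans_lt hx.1) (hsub hx).1.2.le
  have hαa : α ≤ a := not_lt.1 fun h =>
    disjoint_left.1 hS ⟨h, hαx.trans hx.2⟩ (mem_insert_of_mem _ hα)
  have hbβ : b ≤ β := not_lt.1 fun h => disjoint_left.1 hS ⟨hx.1.trans_le hxβ, h⟩ hβ
  refine ⟨towerHeight α - logSlope α β * log α⁻¹, logSlope α β, fun r hr => ?_⟩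
  rw [finiteTower_eqOn_Icc (csInf_le hF.bddBelow hα) hα (hF01 hα).1 hβ (hαx.trans_le hxβ) hgap
    ⟨hαa.trans hr.1.le, hr.2.le.trans hbβ⟩, logChord_eq]

theorem deriv_finiteTower_sq_mul_le (hF : F.Finite) (hne : F.Nonempty) (hF01 : F ⊆ Ioo 0 1)
    {r : ℝ} (hr : r ∈ Ioo 0 1) (hrF : r ∉ F) :
    deriv (finiteTower F) r ^ 2 * r ≤ 1 / (2 * π * log (sSup F)⁻¹ * sInf F) := by
  have hinf := hF01 (hne.csInf_mem hF)
  have hsup := hF01 (hne.csSup_mem hF)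
  have hlog := log_inv_pos_of_mem_Ioo hsup
  rcases lt_or_ge r (sInf F) with h | h
  · have hd : deriv (finiteTower F) r = 0 := by
      rw [deriv_eq_of_eqOn_affine_log (A := finiteTower F (sInf F)) (B := 0) (Iio_mem_nhds h)
        (fun y hy => by rw [finiteTower_of_le_sInf F (le_of_lt hy), zero_mul, add_zero])
        hr.1.ne', neg_zero, zero_div]
    rw [hd, sq, zero_mul, zero_mul]
    exact (one_div_pos.2 (by have := hinf.1; positivity)).le
  have h : sInf F < r := h.lt_of_ne fun e => hrF (e ▸ hne.csInf_mem hF)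
  obtain ⟨α, hα, β, hβ, hαr, hrβ, hgap⟩ := exists_finiteTower_gap hF hne h hr.2.le
  have hrβ : r < β :=
    hrβ.lt_of_ne (ne_of_mem_of_not_mem hβ fun h => h.elim hr.2.ne hrF).symm
  have hα0 := (hF01 hα).1
  have hd : deriv (finiteTower F) r = -logSlope α β / r :=
    deriv_eq_of_eqOn_affine_log (Ioo_mem_nhds hαr hrβ) (fun y hy =>
      (finiteTower_eqOn_Icc (csInf_le hF.bddBelow hα) hα hα0 hβ (hαr.trans hrβ) hgap
        (Ioo_subset_Icc_self hy)).trans (logChord_eq α β y)) hr.1.ne'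
  have hlogα : log (sSup F)⁻¹ ≤ log α⁻¹ :=
    log_le_log (inv_pos.2 hsup.1) (inv_anti₀ hα0 (le_csSup hF.bddAbove hα))
  have hβ1 : β ≤ 1 := hβ.elim le_of_eq fun h => (hF01 h).2.le
  calc deriv (finiteTower F) r ^ 2 * r = logSlope α β ^ 2 / r := by
        rw [hd]; field_simp
    _ ≤ 1 / (2 * π * log (sSup F)⁻¹) / sInf F :=
        div_le_div₀ (by positivity)
          ((logSlope_sq_le hα0 (hαr.trans hrβ) hβ1).trans (by gcongr)) hinf.1 h.le
    _ = 1 / (2 * π * log (sSup F)⁻¹ * sInf F) := div_div _ _ _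

theorem integrableOn_deriv_finiteTower_sq_mul (hF : F.Finite) (hne : F.Nonempty)
    (hF01 : F ⊆ Ioo 0 1) :
    IntegrableOn (fun r => deriv (finiteTower F) r ^ 2 * r) (Ioo 0 1) := by
  refine Integrable.mono' (g := fun _ => 1 / (2 * π * log (sSup F)⁻¹ * sInf F))
    (integrableOn_const measure_Ioo_lt_top.ne)
    (((measurable_deriv _).pow_const 2).mul measurable_id).aestronglyMeasurable ?_
  rw [ae_restrict_iff' measurableSet_Ioo]
  filter_upwards [measure_eq_zero_iff_ae_notMem.1 (hF.measure_zero volume)] with r hrF hr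
  rw [norm_of_nonneg (mul_nonneg (sq_nonneg _) hr.1.le)]
  exact deriv_finiteTower_sq_mul_le hF hne hF01 hr hrF

theorem isTower_finiteTower (hF : F.Finite) (hne : F.Nonempty) (hF01 : F ⊆ Ioo 0 1) :
    IsTower F (finiteTower F) :=
  ⟨hF.isClosed, hne, hF01, continuousOn_finiteTower hF hne hF01,
    (finiteTower_of_mem (mem_insert 1 F) (csInf_le hF.bddBelow (hne.csInf_mem hF) |>.trans
      (hF01 (hne.csInf_mem hF)).2.le)).trans towerHeight_one,
    fun _ hr => finiteTower_of_mem (mem_insert_of_mem _ hr) (csInf_le hF.bddBelow hr),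
    fun _ _ => finiteTower_eq_affine_log_of_gap hF hne hF01,
    integrableOn_deriv_finiteTower_sq_mul hF hne hF01⟩

end finiteTower

section IsTower

variable {C F : Set ℝ} {w u : ℝ → ℝ}

theorem IsTower.bddBelow (hw : IsTower C w) : BddBelow C :=
  ⟨0, fun _ hx => (hw.2.2.1 hx).1.le⟩

theorem IsTower.bddAbove (hw : IsTower C w) : BddAbove C :=
  ⟨1, fun _ hx => (hw.2.2.1 hx).2.le⟩

theorem IsTower.sInf_mem (hw : IsTower C w) : sInf C ∈ C :=
  hw.1.csInf_mem hw.2.1 hw.bddBelow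

theorem IsTower.sSup_mem (hw : IsTower C w) : sSup C ∈ C :=
  hw.1.csSup_mem hw.2.1 hw.bddAbove

theorem IsTower.deriv_eq_zero_of_lt_sInf (hw : IsTower C w) {r : ℝ}
    (hr : r ∈ Ioo 0 (sInf C)) : deriv w r = 0 := by
  have hm := hw.2.2.1 hw.sInf_mem
  have hbdd := hw.bddBelow
  obtain ⟨-, -, -, -, -, -, haff, hint⟩ := hw
  have hsub : Ioo 0 (sInf C) ⊆ Ioo 0 1 \ C := fun x hx =>
    ⟨⟨hx.1, hx.2.trans hm.2⟩, fun hxC => (csInf_le hbdd hxC).not_gt hx.2⟩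
  obtain ⟨A, B, hAB⟩ := haff 0 _ hm.1 hsub
  rw [deriv_eq_of_eqOn_affine_log (Ioo_mem_nhds hr.1 hr.2) hAB hr.1.ne',
    eq_zero_of_integrableOn_deriv_sq_mul hm.1 hAB (hint.mono_set (Ioo_subset_Ioo_right hm.2.le)),
    neg_zero, zero_div]

theorem IsTower.eqOn_of_gap (hw : IsTower C w) (hu : IsTower F u) (hFC : F ⊆ C) {α β : ℝ}
    (hα : 0 < α) (hαβ : α < β) (hβ : β ≤ 1) (hgap : Disjoint (Ioo α β) C)
    (hα' : w α = u α) (hβ' : w β = u β) : EqOn w u (Ioo α β) := by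
  have hsub {S : Set ℝ} (h : Disjoint (Ioo α β) S) : Ioo α β ⊆ Ioo 0 1 \ S := fun x hx =>
    ⟨⟨hα.trans hx.1, hx.2.trans_le hβ⟩, disjoint_left.1 h hx⟩
  have hI : Icc α β ⊆ Ioc 0 1 := fun x hx => ⟨hα.trans_le hx.1, hx.2.trans hβ⟩
  obtain ⟨-, -, -, hwc, -, -, hwaff, -⟩ := hw
  obtain ⟨-, -, -, huc, -, -, huaff, -⟩ := hu
  exact (eqOn_Icc_of_affine_log hα hαβ (hwc.mono hI) (huc.mono hI)
    (hwaff α β hαβ (hsub hgap)) (huaff α β hαβ (hsub (hgap.mono_right hFC))) hα' hβ').mono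
    Ioo_subset_Icc_self

theorem IsTower.deriv_eq_of_subset (hw : IsTower C w) (hu : IsTower F u) (hFC : F ⊆ C)
    (ha : sInf C ∈ F) (hb : sSup C ∈ F) {r : ℝ} (hr : r ∈ Ioo 0 1) (hrC : r ∉ C)
    (hgap : r ∈ Ioo (sInf C) (sSup C) →
      ∃ α ∈ F, ∃ β ∈ F, r ∈ Ioo α β ∧ Disjoint (Ioo α β) C) :
    deriv w r = deriv u r := by
  have hC01 : C ⊆ Ioo 0 1 := hw.2.2.1
  have hval : ∀ x ∈ F, w x = u x := fun x hx =>
    (hw.2.2.2.2.2.1 x (hFC hx)).trans (hu.2.2.2.2.2.1 x hx).symm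
  have hval₁ : w 1 = u 1 := hw.2.2.2.2.1.trans hu.2.2.2.2.1.symm
  rcases lt_or_ge r (sInf C) with h | h
  · have hinf : sInf F = sInf C :=
      IsLeast.csInf_eq ⟨ha, fun x hx => csInf_le hw.bddBelow (hFC hx)⟩
    rw [hw.deriv_eq_zero_of_lt_sInf ⟨hr.1, h⟩, hu.deriv_eq_zero_of_lt_sInf ⟨hr.1, hinf ▸ h⟩]
  have h : sInf C < r := h.lt_of_ne fun e => hrC (e ▸ hw.sInf_mem)
  rcases lt_or_ge r (sSup C) with h' | h'
  · obtain ⟨α, hα, β, hβ, hrαβ, hdisj⟩ := hgap ⟨h, h'⟩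
    exact (hw.eqOn_of_gap hu hFC (hC01 (hFC hα)).1 (hrαβ.1.trans hrαβ.2) (hC01 (hFC hβ)).2.le
      hdisj (hval α hα) (hval β hβ)).deriv isOpen_Ioo hrαβ
  · have h' : sSup C < r := h'.lt_of_ne' fun e => hrC (e ▸ hw.sSup_mem)
    have hdisj : Disjoint (Ioo (sSup C) 1) C :=
      disjoint_left.2 fun x hx hxC => (le_csSup hw.bddAbove hxC).not_gt hx.1
    exact (hw.eqOn_of_gap hu hFC (hC01 hw.sSup_mem).1 (h'.trans hr.2) le_rfl hdisj (hval _ hb)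
      hval₁).deriv isOpen_Ioo ⟨h', hr.2⟩

theorem IsTower.exists_finite_energy_lt (hw : IsTower C w) (hC0 : volume C = 0) {ε : ℝ}
    (hε : 0 < ε) :
    ∃ (F : Set ℝ) (u : ℝ → ℝ), F ⊆ C ∧ F.Finite ∧ F.Nonempty ∧ IsTower F u ∧
      2 * π * ∫ r in Ioo (0:ℝ) 1, (deriv w r - deriv u r) ^ 2 * r < ε := by
  set M := 1 / (2 * π * log (sSup C)⁻¹ * sInf C)
  set U := Ioo (sInf C) (sSup C) \ C
  have hU01 : U ⊆ Ioo 0 1 := fun x hx =>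
    ⟨(hw.2.2.1 hw.sInf_mem).1.trans hx.1.1, hx.1.2.trans (hw.2.2.1 hw.sSup_mem).2⟩
  have hwU : IntegrableOn (fun r => deriv w r ^ 2 * r) U := hw.2.2.2.2.2.2.2.mono_set hU01
  have hUm : MeasurableSet U := measurableSet_Ioo.diff hw.1.measurableSet
  have hUfin : volume U ≠ ⊤ := (measure_mono hU01 |>.trans_lt measure_Ioo_lt_top).ne
  have hg : IntegrableOn (fun r => 2 * (deriv w r ^ 2 * r) + 2 * M) U :=
    (hwU.const_mul 2).add (integrableOn_const hUfin)
  obtain ⟨K, hKU, hK, hKε⟩ :=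
    exists_isCompact_setIntegral_sdiff_lt hUm hUfin hg (div_pos hε two_pi_pos)
  obtain ⟨F₀, hF₀C, hF₀, hcover⟩ := hK.exists_finite_gap_cover fun x hx =>
    hw.1.exists_gap_of_notMem (hKU hx).2 hw.sInf_mem (hKU hx).1.1.le hw.sSup_mem (hKU hx).1.2.le
  set F := insert (sInf C) (insert (sSup C) F₀)
  have hFC : F ⊆ C := insert_subset hw.sInf_mem (insert_subset hw.sSup_mem hF₀C)
  have hF : F.Finite := (hF₀.insert _).insert _
  have hF01 : F ⊆ Ioo 0 1 := hFC.trans hw.2.2.1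
  have hu := isTower_finiteTower hF (insert_nonempty _ _) hF01
  have hinf : sInf F = sInf C :=
    IsLeast.csInf_eq ⟨mem_insert _ _, fun x hx => csInf_le hw.bddBelow (hFC hx)⟩
  have hsup : sSup F = sSup C := IsGreatest.csSup_eq
    ⟨mem_insert_of_mem _ (mem_insert _ _), fun x hx => le_csSup hw.bddAbove (hFC hx)⟩
  have hagree : ∀ r ∈ Ioo 0 1, r ∉ C → r ∉ U \ K → deriv w r = deriv (finiteTower F) r :=
    fun r hr hrC hrUK => hw.deriv_eq_of_subset hu hFC (mem_insert _ _)
      (mem_insert_of_mem _ (mem_insert _ _)) hr hrC fun hr' => by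
        obtain ⟨α, hα, β, hβ, hrαβ, hdisj⟩ := hcover r (not_not.1 fun h => hrUK ⟨⟨hr', hrC⟩, h⟩)
        exact ⟨α, subset_insert _ _ (subset_insert _ _ hα), β,
          subset_insert _ _ (subset_insert _ _ hβ), hrαβ, hdisj⟩
  have hbound : ∀ r ∈ U \ K, deriv (finiteTower F) r ^ 2 * r ≤ M := fun r hr => by
    simpa only [hinf, hsup] using deriv_finiteTower_sq_mul_le hF (insert_nonempty _ _) hF01
      (hU01 hr.1) fun h => hr.1.2 (hFC h)
  refine ⟨F, finiteTower F, hFC, hF, insert_nonempty _ _, hu, ?_⟩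
  calc 2 * π * ∫ r in Ioo (0:ℝ) 1, (deriv w r - deriv (finiteTower F) r) ^ 2 * r
      ≤ 2 * π * ∫ r in U \ K, (2 * (deriv w r ^ 2 * r) + 2 * M) :=
        mul_le_mul_of_nonneg_left (setIntegral_Ioo_sq_sub_mul_le (measurable_deriv _)
          (measurable_deriv _) hC0 (hUm.diff hK.isClosed.measurableSet)
          (sdiff_subset.trans hU01) (hwU.mono_set sdiff_subset) hbound hagree) two_pi_pos.le
    _ < ε := (lt_div_iff₀' two_pi_pos).1 hKε

end IsTower

/-- For any closed set `C ⊂ (0,1)` of Lebesgue measure zero with tower `μ_C`, and any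
`ε > 0`, there is a finite subset `C_ε ⊆ C` whose tower `μ_{C_ε}` satisfies
`‖∇(μ_C − μ_{C_ε})‖₂² < ε`. Consequently there is a sequence of finite sets `Cⱼ ⊆ C`
with `μ_{Cⱼ} → μ_C` in `H¹₀(B)`. -/
theorem tower_finite_approximation (C : Set ℝ) (w : ℝ → ℝ)
    (hw : IsTower C w) (hC0 : MeasureTheory.volume C = 0) :
    (∀ ε > (0:ℝ), ∃ (F : Set ℝ) (u : ℝ → ℝ), F ⊆ C ∧ F.Finite ∧ F.Nonempty ∧
      IsTower F u ∧
      2 * π * ∫ r in Set.Ioo (0:ℝ) 1, (deriv w r - deriv u r) ^ 2 * r < ε) ∧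
    ∃ (F : ℕ → Set ℝ) (u : ℕ → ℝ → ℝ),
      (∀ j, F j ⊆ C ∧ (F j).Finite ∧ IsTower (F j) (u j)) ∧
      Tendsto (fun j =>
          2 * π * ∫ r in Set.Ioo (0:ℝ) 1, (deriv w r - deriv (u j) r) ^ 2 * r)
        atTop (𝓝 0) := by
  refine ⟨fun ε hε => hw.exists_finite_energy_lt hC0 hε, ?_⟩
  choose F u hFC hF _ hu hlt using fun j : ℕ =>
    hw.exists_finite_energy_lt hC0 (Nat.one_div_pos_of_nat (n := j))
  refine ⟨F, u, fun j => ⟨hFC j, hF j, hu j⟩, ?_⟩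
  refine squeeze_zero (fun j => ?_) (fun j => (hlt j).le) tendsto_one_div_add_atTop_nhds_zero_nat
  exact mul_nonneg two_pi_pos.le
    (setIntegral_nonneg measurableSet_Ioo fun r hr => mul_nonneg (sq_nonneg _) hr.1.le)
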